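/- Let D be a combinatorial knot diagram (i.e., its strand set S is connected under adjacency) with n ≥ 2 strands, suppose D is k-meridionally colorable with k ≥ 2 via a sequence of coloring moves with final coloring f : S → {1,…,k}, and let h be the height function of the associated coloring sequence. Then for every color j ∈ {1,…,k}, the color class f^{-1}(j) can be ordered as a sequence t₁,…,t_a in which consecutive strands are adjacent, and in any such ordering the function i ↦ h(t_i) has a unique local maximum; this local maximum occurs at the seed strand of color j. -/

import Mathlib

/-- A combinatorial link diagram: `n` strands and `n` crossings; each crossing has an
(unordered, here recorded as ordered) pair of understrands and an overstrand; every
strand occurs as an understrand of exactly two crossings, counted with multiplicity. -/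
structure LinkDiagram where
  n : ℕ
  Strand : Type
  Crossing : Type
  [strandFintype : Fintype Strand]
  [strandDecEq : DecidableEq Strand]
  [crossingFintype : Fintype Crossing]
  card_strand : Fintype.card Strand = n
  card_crossing : Fintype.card Crossing = n
  under1 : Crossing → Strand
  under2 : Crossing → Strand
  overStrand : Crossing → Strand
  under_twice : ∀ s : Strand,
    Nat.card {c : Crossing // under1 c = s} + Nat.card {c : Crossing // under2 c = s} = 2

attribute [instance] LinkDiagram.strandFintype LinkDiagram.strandDecEq
  LinkDiagram.crossingFintype

namespace LinkDiagram

/-- Two strands are adjacent if they are the two understrands of a common crossing. -/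
def Adj (D : LinkDiagram) (s t : D.Strand) : Prop :=
  ∃ c : D.Crossing, (D.under1 c = s ∧ D.under2 c = t) ∨ (D.under1 c = t ∧ D.under2 c = s)

/-- A subset `B` of the strands is connected if any two of its elements are joined by a
path of adjacent strands lying within `B`. -/
def ConnectedIn (D : LinkDiagram) (B : Set D.Strand) : Prop :=
  ∀ s ∈ B, ∀ t ∈ B,
    Relation.ReflTransGen (fun a b => a ∈ B ∧ b ∈ B ∧ D.Adj a b) s t

/-- The connected component (under adjacency) of the strand `s`. -/
def component (D : LinkDiagram) (s : D.Strand) : Set D.Strand :=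
  {t | Relation.ReflTransGen D.Adj s t}

/-- A witness that `D` is `k`-meridionally colorable: `k` distinct seed strands, partial
colorings `f i` at each stage `i = 0, …, n-k` (a strand not yet colored has value `none`),
where stage `0` colors the seed `j` with color `j` and nothing else, and each stage
`i → i+1` is a coloring move assigning a color to the single new strand `newStrand i`:
it is an understrand at a crossing whose other understrand and overstrand are already
colored, and it receives the color of the other understrand.  At the final stage
`n - k`, every strand is colored. -/
structure ColoringProcess (D : LinkDiagram) (k : ℕ) where
  seed : Fin k → D.Strand
  seed_inj : Function.Injective seed
  f : ℕ → D.Strand → Option (Fin k)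
  newStrand : ℕ → D.Strand
  f0_seed : ∀ j : Fin k, f 0 (seed j) = some j
  f0_none : ∀ s : D.Strand, (∀ j : Fin k, seed j ≠ s) → f 0 s = none
  move_none : ∀ i < D.n - k, f i (newStrand i) = none
  move_eq : ∀ i < D.n - k, ∀ s : D.Strand, s ≠ newStrand i → f (i + 1) s = f i s
  move_adj : ∀ i < D.n - k, ∃ c : D.Crossing, ∃ si : D.Strand,
      ((D.under1 c = newStrand i ∧ D.under2 c = si) ∨
        (D.under1 c = si ∧ D.under2 c = newStrand i)) ∧
      (f i si).isSome ∧ (f i (D.overStrand c)).isSome ∧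
      f (i + 1) (newStrand i) = f i si
  final : ∀ s : D.Strand, (f (D.n - k) s).isSome

/-- The final coloring of a coloring process. -/
def ColoringProcess.final' {D : LinkDiagram} {k : ℕ} (p : ColoringProcess D k) :
    D.Strand → Option (Fin k) :=
  p.f (D.n - k)

/-- `h` is the height function of the coloring sequence associated to the process `p`:
the `j`-th seed (j = 1, …, k) has height `-j`, and the strand colored by the `i`-th
coloring move has height `-(k + i)`. -/
def IsHeightFunction {D : LinkDiagram} {k : ℕ} (p : ColoringProcess D k)
    (h : D.Strand → ℤ) : Prop :=
  (∀ j : Fin k, h (p.seed j) = -((j : ℕ) + 1 : ℤ)) ∧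
  (∀ i < D.n - k, h (p.newStrand i) = -((k : ℤ) + (i : ℕ) + 1))

end LinkDiagram

namespace LinkDiagram

/-- `t : Fin a → Strand` is an ordering of the set `C` as a sequence in which consecutive
strands are adjacent. -/
def IsPathOrdering (D : LinkDiagram) (C : Set D.Strand) (a : ℕ) (t : Fin a → D.Strand) :
    Prop :=
  Function.Injective t ∧ Set.range t = C ∧
    ∀ i : Fin a, ∀ hi : (i : ℕ) + 1 < a, D.Adj (t i) (t ⟨(i : ℕ) + 1, hi⟩)

/-- `hgt` has a local maximum at position `m` of the ordering `t`: the value at `m` is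
greater than the value at each neighbouring position. -/
def IsPathLocalMax (D : LinkDiagram) (hgt : D.Strand → ℤ) (a : ℕ) (t : Fin a → D.Strand)
    (m : Fin a) : Prop :=
  (∀ hm : (m : ℕ) + 1 < a, hgt (t ⟨(m : ℕ) + 1, hm⟩) < hgt (t m)) ∧
  (0 < (m : ℕ) →
    hgt (t ⟨(m : ℕ) - 1, lt_of_le_of_lt (Nat.sub_le _ _) m.isLt⟩) < hgt (t m))

end LinkDiagram

/-! Every strand is an understrand of just two crossings, so it has at most two neighbours.
A connected color class is therefore a path or a cycle, and a cycle would be a whole component,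
i.e. all strands of the knot, which is impossible as there are at least two colors; likewise a
path ordering of a color class has no chords. The strand colored by a move is adjacent to the
strand whose color it copies, which was colored earlier and so is higher. Without chords that
strand is a neighbour along the path, so only the seed, the highest strand of its class, can be
a local maximum. -/

namespace LinkDiagram

variable (D : LinkDiagram)

/-- `u(c) = {s, t}` in the paper's notation. -/
def IsUnderPair (c : D.Crossing) (s t : D.Strand) : Prop :=
  (D.under1 c = s ∧ D.under2 c = t) ∨ (D.under1 c = t ∧ D.under2 c = s)

variable {D}

theorem IsUnderPair.under {c : D.Crossing} {s t : D.Strand} (h : D.IsUnderPair c s t) :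
    D.under1 c = s ∨ D.under2 c = s := by
  rcases h with ⟨h1, -⟩ | ⟨-, h2⟩
  exacts [Or.inl h1, Or.inr h2]

theorem IsUnderPair.eq {c : D.Crossing} {s u v : D.Strand} (hu : D.IsUnderPair c s u)
    (hv : D.IsUnderPair c s v) (hus : u ≠ s) : u = v := by
  unfold IsUnderPair at hu hv
  grind

theorem adj_symm {s t : D.Strand} (h : D.Adj s t) : D.Adj t s :=
  let ⟨c, hc⟩ := h
  ⟨c, hc.symm⟩

theorem card_le_two_of_forall_under {s : D.Strand} {T : Finset D.Crossing}
    (hT : ∀ c ∈ T, D.under1 c = s ∨ D.under2 c = s) : T.card ≤ 2 := by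
  classical
  have h2 := D.under_twice s
  simp only [Nat.card_eq_fintype_card, Fintype.card_subtype] at h2
  calc T.card ≤ (Finset.univ.filter (D.under1 · = s) ∪ Finset.univ.filter (D.under2 · = s)).card :=
        Finset.card_le_card fun c hc => by simpa using hT c hc
    _ ≤ _ := Finset.card_union_le _ _
    _ = 2 := h2

theorem eq_or_eq_of_adj {s u v w : D.Strand} (hu : D.Adj s u) (hv : D.Adj s v)
    (hw : D.Adj s w) (huv : u ≠ v) (hus : u ≠ s) (hws : w ≠ s) :
    w = u ∨ w = v := by
  classical
  obtain ⟨cu, hcu : D.IsUnderPair cu s u⟩ := hu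
  obtain ⟨cv, hcv : D.IsUnderPair cv s v⟩ := hv
  obtain ⟨cw, hcw : D.IsUnderPair cw s w⟩ := hw
  by_contra! hne
  have hcard : ({cu, cv, cw} : Finset D.Crossing).card = 3 := by
    refine Finset.card_eq_three.mpr ⟨cu, cv, cw, ?_, ?_, ?_, rfl⟩
    · rintro rfl; exact huv (hcu.eq hcv hus)
    · rintro rfl; exact hne.1 (hcw.eq hcu hws)
    · rintro rfl; exact hne.2 (hcw.eq hcv hws)
  have := card_le_two_of_forall_under (T := {cu, cv, cw}) (s := s) (by
    simp only [Finset.mem_insert, Finset.mem_singleton]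
    rintro c (rfl | rfl | rfl)
    exacts [hcu.under, hcv.under, hcw.under])
  omega

theorem reflTransGen_symm {B : Set D.Strand} {s t : D.Strand}
    (h : Relation.ReflTransGen (fun a b => a ∈ B ∧ b ∈ B ∧ D.Adj a b) s t) :
    Relation.ReflTransGen (fun a b => a ∈ B ∧ b ∈ B ∧ D.Adj a b) t s := by
  induction h with
  | refl => rfl
  | tail _ hbc ih => exact ih.head ⟨hbc.2.1, hbc.1, adj_symm hbc.2.2⟩

theorem connectedIn_of_reflTransGen {B : Set D.Strand} {s₀ : D.Strand}
    (h : ∀ s ∈ B, Relation.ReflTransGen (fun a b => a ∈ B ∧ b ∈ B ∧ D.Adj a b) s s₀) :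
    D.ConnectedIn B :=
  fun s hs t ht => (h s hs).trans (reflTransGen_symm (h t ht))

theorem eq_univ_of_forall_adj_mem (hD : D.ConnectedIn Set.univ) {B : Set D.Strand}
    {s : D.Strand} (hs : s ∈ B) (hB : ∀ x ∈ B, ∀ y, D.Adj x y → y ∈ B) : B = Set.univ := by
  refine Set.eq_univ_of_forall fun y => ?_
  induction hD s trivial y trivial with
  | refl => exact hs
  | tail _ hbc ih => exact hB _ ih _ hbc.2.2

section Existence

variable {C : Set D.Strand}

theorem exists_adj_of_not_subset (hC : D.ConnectedIn C) {l : List D.Strand}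
    (hlC : ∀ x ∈ l, x ∈ C) {v₀ x : D.Strand} (hv₀ : v₀ ∈ l) (hx : x ∈ C) (hxl : x ∉ l) :
    ∃ u ∈ C, u ∉ l ∧ ∃ v ∈ l, D.Adj v u := by
  induction hC x hx v₀ (hlC v₀ hv₀) using Relation.ReflTransGen.head_induction_on with
  | refl => exact absurd hv₀ hxl
  | @head x y hxy _ ih =>
    by_cases hy : y ∈ l
    · exact ⟨_, hxy.1, hxl, _, hy, adj_symm hxy.2.2⟩
    · exact ih hxy.2.1 hy

/-- A strand of `C` adjacent to the path attaches at an end: an interior strand already has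
two neighbours on the path. -/
theorem exists_longer_chain (hC : D.ConnectedIn C) {l : List D.Strand} (hnd : l.Nodup)
    (hch : l.IsChain D.Adj) (hlC : ∀ x ∈ l, x ∈ C) {v₀ x : D.Strand} (hv₀ : v₀ ∈ l)
    (hx : x ∈ C) (hxl : x ∉ l) :
    ∃ l' : List D.Strand, l'.Nodup ∧ l'.IsChain D.Adj ∧ (∀ x ∈ l', x ∈ C) ∧ v₀ ∈ l' ∧
      l.length < l'.length := by
  obtain ⟨u, huC, hul, v, hvl, hvu⟩ := exists_adj_of_not_subset hC hlC hv₀ hx hxl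
  obtain ⟨l₁, l₂, rfl⟩ := List.append_of_mem hvl
  rcases l₂ with _ | ⟨w₂, l₂⟩
  · refine ⟨l₁ ++ [v] ++ [u], ?_, ?_, ?_, List.mem_append_left _ hv₀, by simp⟩
    · exact List.nodup_append.mpr ⟨hnd, List.nodup_singleton u, by grind⟩
    · exact List.isChain_append.mpr ⟨hch, List.isChain_singleton u, by simpa using hvu⟩
    · grind
  rcases l₁.eq_nil_or_concat with rfl | ⟨l₁, w₁, rfl⟩
  · exact ⟨u :: v :: w₂ :: l₂, by simp_all, by simp_all [adj_symm hvu], by simp_all,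
      by simp_all, by simp⟩
  · exfalso
    rw [List.concat_eq_append] at hch hnd hul
    have hw₁ : D.Adj v w₁ := adj_symm ((List.isChain_append.mp hch).2.2 w₁ (by simp) v rfl)
    have hw₂ : D.Adj v w₂ := (List.isChain_cons_cons.mp (List.isChain_append.mp hch).2.1).1
    simp only [List.nodup_append, List.nodup_cons, List.mem_cons, List.mem_append] at hnd hul
    rcases eq_or_eq_of_adj hw₁ hw₂ hvu (by grind) (by grind) (by grind) with rfl | rfl <;> grind

theorem isPathOrdering_get {l : List D.Strand} (hnd : l.Nodup) (hch : l.IsChain D.Adj) :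
    D.IsPathOrdering {x | x ∈ l} l.length l.get :=
  ⟨List.nodup_iff_injective_get.mp hnd, Set.range_list_get l,
    fun i hi => List.isChain_iff_getElem.mp hch i hi⟩

theorem exists_isPathOrdering (hC : D.ConnectedIn C) (hne : C.Nonempty) :
    ∃ (a : ℕ) (t : Fin a → D.Strand), D.IsPathOrdering C a t := by
  obtain ⟨v₀, hv₀⟩ := hne
  have hgrow : ∀ m, ∃ l : List D.Strand, l.Nodup ∧ l.IsChain D.Adj ∧ (∀ x ∈ l, x ∈ C) ∧
      v₀ ∈ l ∧ (m ≤ l.length ∨ ∀ x ∈ C, x ∈ l) := by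
    intro m
    induction m with
    | zero =>
      exact ⟨[v₀], by simp, List.isChain_singleton v₀, by simpa using hv₀, by simp, by simp⟩
    | succ m ih =>
      obtain ⟨l, hnd, hch, hlC, hl₀, hm⟩ := ih
      by_cases hcov : ∀ x ∈ C, x ∈ l
      · exact ⟨l, hnd, hch, hlC, hl₀, Or.inr hcov⟩
      obtain ⟨x, hx, hxl⟩ : ∃ x ∈ C, x ∉ l := by simpa using hcov
      obtain ⟨l', hnd', hch', hlC', hl₀', hlen⟩ :=
        exists_longer_chain hC hnd hch hlC hl₀ hx hxl
      exact ⟨l', hnd', hch', hlC', hl₀', Or.inl (by have := hm.resolve_right hcov; omega)⟩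
  obtain ⟨l, hnd, hch, hlC, -, hlen | hcov⟩ := hgrow (Fintype.card D.Strand + 1)
  · exact absurd hnd.length_le_card (by omega)
  · obtain rfl : C = {x | x ∈ l} := Set.ext fun x => ⟨hcov x, hlC x⟩
    exact ⟨_, _, isPathOrdering_get hnd hch⟩

end Existence

namespace IsPathOrdering

variable {C : Set D.Strand} {a : ℕ} {t : Fin a → D.Strand}

theorem apply_mem (ht : D.IsPathOrdering C a t) (i : Fin a) : t i ∈ C :=
  ht.2.1 ▸ Set.mem_range_self i

theorem exists_apply_eq (ht : D.IsPathOrdering C a t) {s : D.Strand} (hs : s ∈ C) :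
    ∃ i, t i = s := by
  rwa [← ht.2.1] at hs

theorem adj_of_val_succ (ht : D.IsPathOrdering C a t) {i q : Fin a} (h : (i : ℕ) + 1 = q) :
    D.Adj (t i) (t q) := by
  have := ht.2.2 i (h ▸ q.isLt)
  rwa [show (⟨i + 1, _⟩ : Fin a) = q from Fin.ext h] at this

theorem val_succ_eq_or_of_adj_interior (ht : D.IsPathOrdering C a t) {x w : Fin a}
    (h₀ : 0 < (x : ℕ)) (h₁ : (x : ℕ) + 1 < a) (hadj : D.Adj (t x) (t w)) (hwx : w ≠ x) :
    (w : ℕ) + 1 = x ∨ (x : ℕ) + 1 = w := by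
  have hprev :=
    adj_symm (ht.adj_of_val_succ (i := ⟨x - 1, by omega⟩) (q := x) (by dsimp; omega))
  have hnext := ht.adj_of_val_succ (i := x) (q := ⟨x + 1, h₁⟩) rfl
  have hne : ∀ {y z : Fin a}, (y : ℕ) ≠ z → t y ≠ t z := fun h => ht.1.ne (Fin.ne_of_val_ne h)
  rcases eq_or_eq_of_adj hprev hnext hadj (hne (by dsimp; omega)) (hne (by dsimp; omega))
    (ht.1.ne hwx) with h | h <;> have := congrArg Fin.val (ht.1 h) <;> simp at this <;> omega

theorem eq_univ_of_adj_ends (hD : D.ConnectedIn Set.univ) (ht : D.IsPathOrdering C a t)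
    (ha : 3 ≤ a) {i q : Fin a} (hi : (i : ℕ) = 0) (hq : (q : ℕ) + 1 = a)
    (hadj : D.Adj (t i) (t q)) : C = Set.univ := by
  rw [← ht.2.1]
  refine eq_univ_of_forall_adj_mem hD (Set.mem_range_self i) ?_
  rintro _ ⟨x, rfl⟩ w hw
  by_cases hwx : w = t x
  · exact ⟨x, hwx.symm⟩
  obtain ⟨y, z, hyz, hyx, hy, hz⟩ : ∃ y z : Fin a, y ≠ z ∧ y ≠ x ∧
      D.Adj (t x) (t y) ∧ D.Adj (t x) (t z) := by
    have hx := fun {y : Fin a} h => ht.adj_of_val_succ (i := x) (q := y) h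
    have hx' := fun {y : Fin a} h => adj_symm (ht.adj_of_val_succ (i := y) (q := x) h)
    rcases Nat.eq_zero_or_pos (x : ℕ) with hx₀ | hx₀
    · obtain rfl : x = i := Fin.ext (hx₀.trans hi.symm)
      exact ⟨⟨1, by omega⟩, q, Fin.ne_of_val_ne (by dsimp; omega),
        Fin.ne_of_val_ne (by dsimp; omega), hx (by simp [hx₀]), hadj⟩
    by_cases hxa : (x : ℕ) + 1 = a
    · obtain rfl : x = q := Fin.ext (by omega)
      exact ⟨⟨a - 2, by omega⟩, i, Fin.ne_of_val_ne (by dsimp; omega),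
        Fin.ne_of_val_ne (by dsimp; omega), hx' (by dsimp; omega), adj_symm hadj⟩
    · exact ⟨⟨x - 1, by omega⟩, ⟨x + 1, by omega⟩, Fin.ne_of_val_ne (by dsimp; omega),
        Fin.ne_of_val_ne (by dsimp; omega), hx' (by dsimp; omega), hx rfl⟩
  rcases eq_or_eq_of_adj hy hz hw (ht.1.ne hyz) (ht.1.ne hyx) hwx with rfl | rfl
  exacts [⟨y, rfl⟩, ⟨z, rfl⟩]

/-- A path ordering of a proper subset of a knot diagram has no chords: a chord would
give a strand three neighbours or close the path into a cycle, which is a whole component. -/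
theorem val_succ_eq_or_of_adj (hD : D.ConnectedIn Set.univ) (ht : D.IsPathOrdering C a t)
    (hC : C ≠ Set.univ) {i q : Fin a} (hadj : D.Adj (t i) (t q)) (hiq : i ≠ q) :
    (i : ℕ) + 1 = q ∨ (q : ℕ) + 1 = i := by
  wlog hlt : (i : ℕ) < q generalizing i q
  · exact (this (adj_symm hadj) hiq.symm (by have := Fin.val_ne_of_ne hiq; omega)).symm
  by_contra! hfar
  rcases Nat.eq_zero_or_pos (i : ℕ) with hi | hi
  · by_cases hq : (q : ℕ) + 1 < a
    · have := ht.val_succ_eq_or_of_adj_interior (by omega) hq (adj_symm hadj) hiq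
      omega
    · exact hC (ht.eq_univ_of_adj_ends hD (by omega) hi (by omega) hadj)
  · have := ht.val_succ_eq_or_of_adj_interior hi (by omega) hadj hiq.symm
    omega

end IsPathOrdering

section LocalMax

variable {hgt : D.Strand → ℤ} {a : ℕ} {t : Fin a → D.Strand} {m : Fin a}

theorem IsPathLocalMax.lt_of_val_succ_eq_or (hm : D.IsPathLocalMax hgt a t m) {q : Fin a}
    (hq : (q : ℕ) + 1 = m ∨ (m : ℕ) + 1 = q) : hgt (t q) < hgt (t m) := by
  rcases hq with hq | hq
  · rw [show q = ⟨m - 1, by omega⟩ from Fin.ext (by dsimp; omega)]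
    exact hm.2 (by omega)
  · rw [show q = ⟨m + 1, by omega⟩ from Fin.ext (by dsimp; omega)]
    exact hm.1 _

theorem isPathLocalMax_of_forall_lt (h : ∀ i, i ≠ m → hgt (t i) < hgt (t m)) :
    D.IsPathLocalMax hgt a t m :=
  ⟨fun _ => h _ (Fin.ne_of_val_ne (by dsimp; omega)),
    fun _ => h _ (Fin.ne_of_val_ne (by dsimp; omega))⟩

variable {C : Set D.Strand} {s₀ : D.Strand}

theorem IsPathOrdering.eq_of_isPathLocalMax (hD : D.ConnectedIn Set.univ)
    (ht : D.IsPathOrdering C a t) (hC : C ≠ Set.univ)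
    (hup : ∀ s ∈ C, s ≠ s₀ → ∃ s', D.Adj s s' ∧ s' ∈ C ∧ hgt s < hgt s')
    (hm : D.IsPathLocalMax hgt a t m) : t m = s₀ := by
  by_contra hne
  obtain ⟨_, hadj, hs, hlt⟩ := hup _ (ht.apply_mem m) hne
  obtain ⟨q, rfl⟩ := ht.exists_apply_eq hs
  have hqm : q ≠ m := by rintro rfl; exact lt_irrefl _ hlt
  exact (hm.lt_of_val_succ_eq_or
    (ht.val_succ_eq_or_of_adj hD hC (adj_symm hadj) hqm)).not_gt hlt

theorem IsPathOrdering.existsUnique_isPathLocalMax (hD : D.ConnectedIn Set.univ)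
    (ht : D.IsPathOrdering C a t) (hC : C ≠ Set.univ) (hs₀ : s₀ ∈ C)
    (htop : ∀ s ∈ C, s ≠ s₀ → hgt s < hgt s₀)
    (hup : ∀ s ∈ C, s ≠ s₀ → ∃ s', D.Adj s s' ∧ s' ∈ C ∧ hgt s < hgt s') :
    ∃! m, D.IsPathLocalMax hgt a t m := by
  obtain ⟨r, rfl⟩ := ht.exists_apply_eq hs₀
  exact ⟨r, isPathLocalMax_of_forall_lt fun i hi => htop _ (ht.apply_mem i) (ht.1.ne hi),
    fun m hm => ht.1 (ht.eq_of_isPathLocalMax hD hC hup hm)⟩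

end LocalMax

namespace ColoringProcess

variable {k : ℕ} (p : D.ColoringProcess k)

theorem f_eq_of_le {i i' : ℕ} (hii' : i ≤ i') (hi' : i' ≤ D.n - k) {s : D.Strand}
    {c : Fin k} (hc : p.f i s = some c) : p.f i' s = some c := by
  induction i', hii' using Nat.le_induction with
  | base => exact hc
  | succ m _ ih =>
    by_cases hs : s = p.newStrand m
    · have := p.move_none m (by omega)
      rw [← hs, ih (by omega)] at this
      exact absurd this (Option.some_ne_none c)
    · rw [p.move_eq m (by omega) s hs, ih (by omega)]

theorem final'_eq_of_f_eq {i : ℕ} (hi : i ≤ D.n - k) {s : D.Strand} {c : Fin k}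
    (hc : p.f i s = some c) : p.final' s = some c :=
  p.f_eq_of_le hi le_rfl hc

theorem final'_seed (j : Fin k) : p.final' (p.seed j) = some j :=
  p.final'_eq_of_f_eq (Nat.zero_le _) (p.f0_seed j)

theorem eq_of_final'_seed {j j' : Fin k} (h : p.final' (p.seed j') = some j) : j' = j :=
  Option.some_injective _ ((p.final'_seed j').symm.trans h)

theorem final'_eq_ne_univ (hk : 2 ≤ k) (j : Fin k) :
    {s | p.final' s = some j} ≠ Set.univ := by
  have := Fin.nontrivial_iff_two_le.mpr hk
  obtain ⟨j', hj'⟩ := exists_ne j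
  exact fun hC => hj' (p.eq_of_final'_seed (Set.eq_univ_iff_forall.mp hC (p.seed j')))

theorem exists_seed_or_newStrand_of_isSome {i : ℕ} (hi : i ≤ D.n - k) {s : D.Strand}
    (hs : (p.f i s).isSome) : (∃ j, s = p.seed j) ∨ ∃ i' < i, s = p.newStrand i' := by
  induction i with
  | zero =>
    by_contra! hne
    rw [p.f0_none s fun j h => hne.1 j h.symm] at hs
    exact Bool.false_ne_true hs
  | succ m ih =>
    by_cases hsm : s = p.newStrand m
    · exact Or.inr ⟨m, by omega, hsm⟩
    rw [p.move_eq m (by omega) s hsm] at hs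
    rcases ih (by omega) hs with h | ⟨i', hi', he⟩
    exacts [Or.inl h, Or.inr ⟨i', by omega, he⟩]

theorem exists_seed_or_newStrand (s : D.Strand) :
    (∃ j, s = p.seed j) ∨ ∃ i < D.n - k, s = p.newStrand i :=
  p.exists_seed_or_newStrand_of_isSome le_rfl (p.final s)

theorem exists_adj_final'_eq {i : ℕ} (hi : i < D.n - k) :
    ∃ s, D.Adj (p.newStrand i) s ∧ p.final' s = p.final' (p.newStrand i) ∧
      ((∃ j, s = p.seed j) ∨ ∃ i' < i, s = p.newStrand i') := by
  obtain ⟨c, s, hc, hs, -, hmove⟩ := p.move_adj i hi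
  obtain ⟨col, hcol⟩ := Option.isSome_iff_exists.mp hs
  refine ⟨s, ⟨c, hc⟩, ?_, p.exists_seed_or_newStrand_of_isSome hi.le hs⟩
  rw [p.final'_eq_of_f_eq hi.le hcol, p.final'_eq_of_f_eq hi (hmove.trans hcol)]

theorem connectedIn_final'_eq (j : Fin k) : D.ConnectedIn {s | p.final' s = some j} := by
  refine connectedIn_of_reflTransGen (s₀ := p.seed j) fun s hs => ?_
  rcases p.exists_seed_or_newStrand s with ⟨j', rfl⟩ | ⟨i, hi, rfl⟩
  · obtain rfl : j' = j := p.eq_of_final'_seed hs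
    rfl
  induction i using Nat.strong_induction_on with
  | _ i ih =>
    obtain ⟨s, hadj, hcol, hs'⟩ := p.exists_adj_final'_eq hi
    have hsj : p.final' s = some j := hcol.trans hs
    refine Relation.ReflTransGen.head ⟨hs, hsj, hadj⟩ ?_
    rcases hs' with ⟨j', rfl⟩ | ⟨i', hi', rfl⟩
    · obtain rfl : j' = j := p.eq_of_final'_seed hsj
      rfl
    · exact ih i' hi' (by omega) hsj

variable {p} {h : D.Strand → ℤ}

theorem height_newStrand_lt_seed (hh : IsHeightFunction p h) {i : ℕ} (hi : i < D.n - k)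
    (j : Fin k) : h (p.newStrand i) < h (p.seed j) := by
  rw [hh.2 i hi, hh.1 j]
  omega

theorem height_newStrand_lt_newStrand (hh : IsHeightFunction p h) {i i' : ℕ}
    (hi : i < D.n - k) (hi' : i' < i) : h (p.newStrand i) < h (p.newStrand i') := by
  rw [hh.2 i hi, hh.2 i' (by omega)]
  omega

theorem height_lt_seed (hh : IsHeightFunction p h) {j : Fin k} {s : D.Strand}
    (hs : p.final' s = some j) (hne : s ≠ p.seed j) : h s < h (p.seed j) := by
  rcases p.exists_seed_or_newStrand s with ⟨j', rfl⟩ | ⟨i, hi, rfl⟩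
  · obtain rfl : j' = j := p.eq_of_final'_seed hs
    exact absurd rfl hne
  · exact height_newStrand_lt_seed hh hi j

theorem exists_adj_height_lt (hh : IsHeightFunction p h) {j : Fin k} {s : D.Strand}
    (hs : p.final' s = some j) (hne : s ≠ p.seed j) :
    ∃ s', D.Adj s s' ∧ p.final' s' = some j ∧ h s < h s' := by
  rcases p.exists_seed_or_newStrand s with ⟨j', rfl⟩ | ⟨i, hi, rfl⟩
  · obtain rfl : j' = j := p.eq_of_final'_seed hs
    exact absurd rfl hne
  obtain ⟨s', hadj, hcol, ⟨j', rfl⟩ | ⟨i', hi', rfl⟩⟩ := p.exists_adj_final'_eq hi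
  · exact ⟨_, hadj, hcol.trans hs, height_newStrand_lt_seed hh hi j'⟩
  · exact ⟨_, hadj, hcol.trans hs, height_newStrand_lt_newStrand hh hi hi'⟩

end ColoringProcess

end LinkDiagram

theorem wirtinger_knot_unique_localMax_general (D : LinkDiagram)
    (hknot : D.ConnectedIn Set.univ)
    (k : ℕ) (hk : 2 ≤ k) (p : LinkDiagram.ColoringProcess D k)
    (h : D.Strand → ℤ) (hh : LinkDiagram.IsHeightFunction p h) (j : Fin k) :
    (∃ (a : ℕ) (t : Fin a → D.Strand),
        D.IsPathOrdering {s : D.Strand | p.final' s = some j} a t) ∧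
    (∀ (a : ℕ) (t : Fin a → D.Strand),
        D.IsPathOrdering {s : D.Strand | p.final' s = some j} a t →
        (∃! m : Fin a, D.IsPathLocalMax h a t m) ∧
        (∀ m : Fin a, D.IsPathLocalMax h a t m → t m = p.seed j)) := by
  have hC := p.final'_eq_ne_univ hk j
  have hup (s : D.Strand) := p.exists_adj_height_lt hh (j := j) (s := s)
  refine ⟨D.exists_isPathOrdering (p.connectedIn_final'_eq j) ⟨_, p.final'_seed j⟩,
    fun a t ht => ⟨?_, fun m => ht.eq_of_isPathLocalMax hknot hC hup⟩⟩
  exact ht.existsUnique_isPathLocalMax hknot hC (p.final'_seed j)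
    (fun _ => p.height_lt_seed hh) hup

/-- For a knot diagram (strand set connected under adjacency) with
`n ≥ 2` strands which is `k`-meridionally colorable with `k ≥ 2`, every final color
class can be ordered as a sequence in which consecutive strands are adjacent, and in
any such ordering the height function has a unique local maximum, occurring at the
seed strand of that color. -/
theorem wirtinger_knot_unique_localMax (D : LinkDiagram)
    (hknot : D.ConnectedIn Set.univ) (hn : 2 ≤ D.n)
    (k : ℕ) (hk : 2 ≤ k) (p : LinkDiagram.ColoringProcess D k)
    (h : D.Strand → ℤ) (hh : LinkDiagram.IsHeightFunction p h) (j : Fin k) :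
    (∃ (a : ℕ) (t : Fin a → D.Strand),
        D.IsPathOrdering {s : D.Strand | p.final' s = some j} a t) ∧
    (∀ (a : ℕ) (t : Fin a → D.Strand),
        D.IsPathOrdering {s : D.Strand | p.final' s = some j} a t →
        (∃! m : Fin a, D.IsPathLocalMax h a t m) ∧
        (∀ m : Fin a, D.IsPathLocalMax h a t m → t m = p.seed j)) :=
  wirtinger_knot_unique_localMax_general D hknot k hk p h hh j
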